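/- arXiv:2407.14909 — 4 statements merged into one kernel-verified Lean document; each statement's English description precedes it below -/
import Mathlib

section
/- Let V be a 3-dimensional real vector space with a symmetric bilinear form g of rank 2, and let k be a nonzero vector with g(k,·)=0. If h is a symmetric bilinear form on the dual space V* satisfying g∘h∘g = g (i.e., h(g(u,·),g(v,·)) = g(u,v) for all u,v) and h(ℓ,·)=0 for a fixed covector ℓ with ℓ(k) = -1, then h is unique: any two such h agree. -/
/-!
Every covector `g u` kills `k`, while `ℓ k ≠ 0`, so `ℓ` lies outside the 2-dimensional range of `g`
and the range of `g` together with `ℓ` spans the 3-dimensional dual. A symmetric `h` with `h ℓ = 0`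
is therefore determined by its values on `range g × range g`, which `h (g u) (g v) = g u v` fixes.
-/

open Module Submodule

theorem Submodule.sup_span_singleton_eq_top_of_finrank_add_one {K E : Type*} [DivisionRing K]
    [AddCommGroup E] [Module K E] [FiniteDimensional K E] {W : Submodule K E}
    (hW : finrank K W + 1 = finrank K E) {x : E} (hx : x ∉ W) : W ⊔ K ∙ x = ⊤ := by
  have hlt : W < W ⊔ K ∙ x := left_lt_sup.mpr fun h => hx (span_singleton_le_iff_mem x W |>.mp h)
  have hgt := finrank_lt_finrank_of_lt hlt
  have hle := finrank_le (W ⊔ K ∙ x)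
  exact eq_top_of_finrank_eq (by omega)

theorem LinearMap.ext_on₂ {R M M' N : Type*} [CommSemiring R] [AddCommMonoid M] [Module R M]
    [AddCommMonoid M'] [Module R M'] [AddCommMonoid N] [Module R N] {s : Set M} {t : Set M'}
    (hs : span R s = ⊤) (ht : span R t = ⊤) {B₁ B₂ : M →ₗ[R] M' →ₗ[R] N}
    (h : ∀ x ∈ s, ∀ y ∈ t, B₁ x y = B₂ x y) : B₁ = B₂ :=
  ext_on hs fun x hx => ext_on ht fun y hy => h x hx y hy

theorem LinearMap.eq_of_eqOn_of_sup_span_singleton_eq_top {R M N : Type*} [CommRing R]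
    [AddCommGroup M] [Module R M] [AddCommGroup N] [Module R N] {W : Submodule R M} {x : M}
    (hWx : W ⊔ R ∙ x = ⊤) {B₁ B₂ : M →ₗ[R] M →ₗ[R] N}
    (hB₁ : ∀ a b, B₁ a b = B₁ b a) (hB₂ : ∀ a b, B₂ a b = B₂ b a) (hx₁ : B₁ x = 0) (hx₂ : B₂ x = 0)
    (hW : ∀ a ∈ W, ∀ b ∈ W, B₁ a b = B₂ a b) : B₁ = B₂ := by
  have hspan : span R (W ∪ {x} : Set M) = ⊤ := by
    rw [span_union, span_eq, hWx]
  refine ext_on₂ hspan hspan ?_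
  rintro a (ha | rfl) b (hb | rfl)
  · exact hW a ha b hb
  · rw [hB₁, hB₂, hx₁, hx₂]
  · rw [hx₁, hx₂]
  · rw [hx₁, hx₂]

theorem stmt_0_general (V : Type*) [AddCommGroup V] [Module ℝ V]
    (hdim : Module.finrank ℝ V = 3)
    (g : V →ₗ[ℝ] V →ₗ[ℝ] ℝ)
    (hgsymm : ∀ u v : V, g u v = g v u)
    (hrank : Module.finrank ℝ (LinearMap.range g) = 2)
    (k : V) (hgk : g k = 0)
    (ℓ : Module.Dual ℝ V) (hℓk : ℓ k = -1)
    (h₁ h₂ : Module.Dual ℝ V →ₗ[ℝ] Module.Dual ℝ V →ₗ[ℝ] ℝ)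
    (h₁symm : ∀ α β, h₁ α β = h₁ β α) (h₂symm : ∀ α β, h₂ α β = h₂ β α)
    (h₁g : ∀ u v : V, h₁ (g u) (g v) = g u v) (h₂g : ∀ u v : V, h₂ (g u) (g v) = g u v)
    (h₁ℓ : h₁ ℓ = 0) (h₂ℓ : h₂ ℓ = 0) :
    h₁ = h₂ := by
  have : FiniteDimensional ℝ V := Module.finite_of_finrank_eq_succ hdim
  have hℓ : ℓ ∉ LinearMap.range g := by
    rintro ⟨u, rfl⟩
    rw [hgsymm u k, hgk] at hℓk
    norm_num at hℓk
  have hcodim : finrank ℝ (LinearMap.range g) + 1 = finrank ℝ (Dual ℝ V) := by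
    rw [hrank, Subspace.dual_finrank_eq, hdim]
  refine LinearMap.eq_of_eqOn_of_sup_span_singleton_eq_top
    (sup_span_singleton_eq_top_of_finrank_add_one hcodim hℓ) h₁symm h₂symm h₁ℓ h₂ℓ ?_
  rintro _ ⟨u, rfl⟩ _ ⟨v, rfl⟩
  rw [h₁g, h₂g]

/-- Uniqueness of the "inverse" degenerate first fundamental form on a null
hypersurface: if `g` is a symmetric bilinear form of rank 2 on a 3-dimensional
real vector space `V` whose degeneration vector is `k ≠ 0` (`g k = 0`), and
`ℓ` is a covector with `ℓ k = -1`, then a symmetric bilinear form `h` on the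
dual space satisfying `h (g u) (g v) = g u v` and `h ℓ = 0` is unique. -/
theorem stmt_0 (V : Type*) [AddCommGroup V] [Module ℝ V] [FiniteDimensional ℝ V]
    (hdim : Module.finrank ℝ V = 3)
    (g : V →ₗ[ℝ] V →ₗ[ℝ] ℝ)
    (hgsymm : ∀ u v : V, g u v = g v u)
    (hrank : Module.finrank ℝ (LinearMap.range g) = 2)
    (k : V) (hk : k ≠ 0) (hgk : g k = 0)
    (ℓ : Module.Dual ℝ V) (hℓk : ℓ k = -1)
    (h₁ h₂ : Module.Dual ℝ V →ₗ[ℝ] Module.Dual ℝ V →ₗ[ℝ] ℝ)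
    (h₁symm : ∀ α β, h₁ α β = h₁ β α) (h₂symm : ∀ α β, h₂ α β = h₂ β α)
    (h₁g : ∀ u v : V, h₁ (g u) (g v) = g u v) (h₂g : ∀ u v : V, h₂ (g u) (g v) = g u v)
    (h₁ℓ : h₁ ℓ = 0) (h₂ℓ : h₂ ℓ = 0) :
    h₁ = h₂ :=
  stmt_0_general V hdim g hgsymm hrank k hgk ℓ hℓk h₁ h₂ h₁symm h₂symm h₁g h₂g h₁ℓ h₂ℓ
end

section
/- Let (S, m) be a 2-dimensional Riemannian manifold and λ > 0 a smooth function. Under the conformal rescaling m̃_{AB} = λ² m_{AB}, the tensor field T_{AB}(λ) := -λ^{-1}∇_A∇_B λ + 2λ^{-2}(∇_A λ)(∇_B λ) - (1/2)λ^{-2} m_{AB} ∇_M λ ∇^M λ satisfies the cocycle condition: if U_{AB} transforms as Ũ_{AB} = U_{AB} + T_{AB}(λ), then composing two rescalings with factors λ₁ and λ₂ gives the same transformation as a single rescaling with factor λ₁λ₂, i.e., T_{AB}(λ₁λ₂) = T_{AB}(λ₁) + T^{(λ₁)}_{AB}(λ₂), where T^{(λ₁)} is computed with the Levi-Civita connection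 of λ₁²m. -/
/-! Coordinate framework on a chart of a 2-dimensional Riemannian manifold. -/

/-- Partial derivative in the `i`-th coordinate direction. -/
noncomputable def pd (i : Fin 2) (f : (Fin 2 → ℝ) → ℝ) (x : Fin 2 → ℝ) : ℝ :=
  fderiv ℝ f x (Pi.single i 1)

/-- Christoffel symbols `Γ^C_{AB}` of the Levi-Civita connection of `m`. -/
noncomputable def christoffel (m : (Fin 2 → ℝ) → Matrix (Fin 2) (Fin 2) ℝ)
    (x : Fin 2 → ℝ) (C A B : Fin 2) : ℝ :=
  (1/2) * ∑ D, (m x)⁻¹ C D *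
    (pd A (fun y => m y D B) x + pd B (fun y => m y D A) x - pd D (fun y => m y A B) x)

/-- Covariant Hessian `∇_A ∇_B f` with respect to the metric `m`. -/
noncomputable def hess (m : (Fin 2 → ℝ) → Matrix (Fin 2) (Fin 2) ℝ)
    (f : (Fin 2 → ℝ) → ℝ) (x : Fin 2 → ℝ) (A B : Fin 2) : ℝ :=
  pd A (fun y => pd B f y) x - ∑ C, christoffel m x C A B * pd C f x

/-- The Schouten-type conformal shift tensor
`T_{AB}(λ) = -λ⁻¹∇_A∇_Bλ + 2λ⁻²∇_Aλ∇_Bλ - (1/2)λ⁻² m_{AB} ∇_Mλ∇^Mλ`. -/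
noncomputable def schoutenShift (m : (Fin 2 → ℝ) → Matrix (Fin 2) (Fin 2) ℝ)
    (lam : (Fin 2 → ℝ) → ℝ) (x : Fin 2 → ℝ) (A B : Fin 2) : ℝ :=
  -(lam x)⁻¹ * hess m lam x A B
    + 2 * ((lam x)⁻¹)^2 * pd A lam x * pd B lam x
    - (1/2) * ((lam x)⁻¹)^2 * m x A B *
        ∑ M, ∑ N, (m x)⁻¹ M N * pd M lam x * pd N lam x

set_option maxHeartbeats 1000000

lemma pd_mul {f g : (Fin 2 → ℝ) → ℝ} {x : Fin 2 → ℝ} (i : Fin 2)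
    (hf : DifferentiableAt ℝ f x) (hg : DifferentiableAt ℝ g x) :
    pd i (fun y => f y * g y) x = pd i f x * g x + f x * pd i g x := by
  unfold pd
  rw [fderiv_fun_mul hf hg]
  simp [smul_eq_mul]; ring

lemma pd_add {f g : (Fin 2 → ℝ) → ℝ} {x : Fin 2 → ℝ} (i : Fin 2)
    (hf : DifferentiableAt ℝ f x) (hg : DifferentiableAt ℝ g x) :
    pd i (fun y => f y + g y) x = pd i f x + pd i g x := by
  unfold pd
  rw [fderiv_fun_add hf hg]; simp

lemma contDiff_pd {f : (Fin 2 → ℝ) → ℝ} (i : Fin 2) (hf : ContDiff ℝ (⊤ : ℕ∞) f) :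
    ContDiff ℝ (⊤ : ℕ∞) (pd i f) := by
  have h1 : ContDiff ℝ (⊤ : ℕ∞) (fderiv ℝ f) := hf.fderiv_right (by simp)
  exact (ContinuousLinearMap.apply ℝ ℝ (Pi.single i 1 : Fin 2 → ℝ)).contDiff.comp h1

/-- conformal transformation of Christoffel symbols -/
lemma christoffel_conformal (m : (Fin 2 → ℝ) → Matrix (Fin 2) (Fin 2) ℝ)
    (hmsmooth : ∀ A B, ContDiff ℝ (⊤ : ℕ∞) fun x => m x A B) (hmpos : ∀ x, (m x).PosDef)
    (lam₁ : (Fin 2 → ℝ) → ℝ) (h₁ : ContDiff ℝ (⊤ : ℕ∞) lam₁) (h₁pos : ∀ x, 0 < lam₁ x)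
    (x : Fin 2 → ℝ) (C A B : Fin 2) :
    christoffel (fun y => (lam₁ y)^2 • m y) x C A B
      = christoffel m x C A B
        + (lam₁ x)⁻¹ * ((if C = A then (1:ℝ) else 0) * pd B lam₁ x
          + (if C = B then (1:ℝ) else 0) * pd A lam₁ x
          - m x A B * ∑ D, (m x)⁻¹ C D * pd D lam₁ x) := by
  have h1x : lam₁ x ≠ 0 := (h₁pos x).ne'
  have hdet : (m x).det ≠ 0 := (hmpos x).det_pos.ne'
  have hdu : IsUnit (m x).det := isUnit_iff_ne_zero.2 hdet
  have hinv : ((lam₁ x)^2 • m x)⁻¹ = ((lam₁ x)^2)⁻¹ • (m x)⁻¹ := by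
    apply Matrix.inv_eq_left_inv
    rw [Matrix.smul_mul, Matrix.mul_smul, smul_smul,
      inv_mul_cancel₀ (pow_ne_zero 2 h1x), one_smul, Matrix.nonsing_inv_mul _ hdu]
  have d1 : ∀ y, DifferentiableAt ℝ lam₁ y := fun y => (h₁.differentiable (by simp)) y
  have dm : ∀ (D E : Fin 2) y, DifferentiableAt ℝ (fun z => m z D E) y :=
    fun D E y => ((hmsmooth D E).differentiable (by simp)) y
  have h_pm : ∀ (i D E : Fin 2), pd i (fun y => (lam₁ y)^2 * m y D E) x
      = 2 * lam₁ x * pd i lam₁ x * m x D E + (lam₁ x)^2 * pd i (fun y => m y D E) x := by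
    intro i D E
    have e1 : (fun y => (lam₁ y)^2 * m y D E) = fun y => (lam₁ y * lam₁ y) * m y D E := by
      funext y; ring
    rw [e1, pd_mul i ((d1 x).fun_mul (d1 x)) (dm D E x), pd_mul i (d1 x) (d1 x)]
    ring
  have hd' : (m x 0 0 * m x 1 1 - m x 0 1 * m x 1 0) ≠ 0 := by
    rwa [Matrix.det_fin_two] at hdet
  have hadj : (m x)⁻¹ = (m x 0 0 * m x 1 1 - m x 0 1 * m x 1 0)⁻¹ •
      !![m x 1 1, -(m x 0 1); -(m x 1 0), m x 0 0] := by
    rw [Matrix.inv_def, Matrix.det_fin_two, Matrix.adjugate_fin_two, Ring.inverse_eq_inv]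
  have i00 : (m x)⁻¹ 0 0 = (m x 0 0 * m x 1 1 - m x 0 1 * m x 1 0)⁻¹ * m x 1 1 := by
    rw [hadj]; simp
  have i01 : (m x)⁻¹ 0 1 = (m x 0 0 * m x 1 1 - m x 0 1 * m x 1 0)⁻¹ * (-(m x 0 1)) := by
    rw [hadj]; simp
  have i10 : (m x)⁻¹ 1 0 = (m x 0 0 * m x 1 1 - m x 0 1 * m x 1 0)⁻¹ * (-(m x 1 0)) := by
    rw [hadj]; simp
  have i11 : (m x)⁻¹ 1 1 = (m x 0 0 * m x 1 1 - m x 0 1 * m x 1 0)⁻¹ * m x 0 0 := by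
    rw [hadj]; simp
  simp only [christoffel, Fin.sum_univ_two, Matrix.smul_apply, smul_eq_mul, hinv, h_pm]
  fin_cases C <;> fin_cases A <;> fin_cases B <;>
    · simp only [Fin.isValue, Fin.zero_eta, Fin.mk_one, i00, i01, i10, i11, if_true,
        if_false, one_ne_zero, zero_ne_one, reduceIte]
      field_simp
      ring

/-- conformal transformation of the Hessian -/
lemma hess_conformal (m : (Fin 2 → ℝ) → Matrix (Fin 2) (Fin 2) ℝ)
    (hmsmooth : ∀ A B, ContDiff ℝ (⊤ : ℕ∞) fun x => m x A B) (hmpos : ∀ x, (m x).PosDef)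
    (lam₁ lam₂ : (Fin 2 → ℝ) → ℝ) (h₁ : ContDiff ℝ (⊤ : ℕ∞) lam₁) (h₁pos : ∀ x, 0 < lam₁ x)
    (x : Fin 2 → ℝ) (A B : Fin 2) :
    hess (fun y => (lam₁ y)^2 • m y) lam₂ x A B
      = hess m lam₂ x A B
        - (lam₁ x)⁻¹ * (pd A lam₁ x * pd B lam₂ x + pd B lam₁ x * pd A lam₂ x
          - m x A B * ∑ C, ∑ D, (m x)⁻¹ C D * pd D lam₁ x * pd C lam₂ x) := by
  simp only [hess, Fin.sum_univ_two,
    christoffel_conformal m hmsmooth hmpos lam₁ h₁ h₁pos x]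
  fin_cases A <;> fin_cases B <;>
    · simp
      ring

/-- Hessian of a product -/
lemma hess_prod (m : (Fin 2 → ℝ) → Matrix (Fin 2) (Fin 2) ℝ)
    (lam₁ lam₂ : (Fin 2 → ℝ) → ℝ) (h₁ : ContDiff ℝ (⊤ : ℕ∞) lam₁) (h₂ : ContDiff ℝ (⊤ : ℕ∞) lam₂)
    (x : Fin 2 → ℝ) (A B : Fin 2) :
    hess m (fun y => lam₁ y * lam₂ y) x A B
      = lam₂ x * hess m lam₁ x A B + lam₁ x * hess m lam₂ x A B
        + pd B lam₁ x * pd A lam₂ x + pd A lam₁ x * pd B lam₂ x := by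
  have d1 : ∀ y, DifferentiableAt ℝ lam₁ y := fun y => (h₁.differentiable (by simp)) y
  have d2 : ∀ y, DifferentiableAt ℝ lam₂ y := fun y => (h₂.differentiable (by simp)) y
  have dp1 : ∀ (i : Fin 2) y, DifferentiableAt ℝ (pd i lam₁) y :=
    fun i y => ((contDiff_pd i h₁).differentiable (by simp)) y
  have dp2 : ∀ (i : Fin 2) y, DifferentiableAt ℝ (pd i lam₂) y :=
    fun i y => ((contDiff_pd i h₂).differentiable (by simp)) y
  have h_pl : ∀ i : Fin 2, pd i (fun y => lam₁ y * lam₂ y) x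
      = pd i lam₁ x * lam₂ x + lam₁ x * pd i lam₂ x := fun i => pd_mul i (d1 x) (d2 x)
  have h_ppl : pd A (fun y => pd B (fun z => lam₁ z * lam₂ z) y) x
      = pd A (pd B lam₁) x * lam₂ x + pd B lam₁ x * pd A lam₂ x
        + pd A lam₁ x * pd B lam₂ x + lam₁ x * pd A (pd B lam₂) x := by
    have e1 : (fun y => pd B (fun z => lam₁ z * lam₂ z) y)
        = fun y => pd B lam₁ y * lam₂ y + lam₁ y * pd B lam₂ y :=
      funext fun y => pd_mul B (d1 y) (d2 y)
    rw [e1, pd_add A ((dp1 B x).fun_mul (d2 x)) ((d1 x).fun_mul (dp2 B x)),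
      pd_mul A (dp1 B x) (d2 x), pd_mul A (d1 x) (dp2 B x)]
    ring
  simp only [hess, Fin.sum_univ_two, h_ppl, h_pl]
  ring

/-- Cocycle property of the conformal transformation law of `U_{AB}`:
composing rescalings by `λ₁` and `λ₂` agrees with rescaling by `λ₁λ₂`, i.e.
`T(λ₁λ₂) = T(λ₁) + T^{(λ₁)}(λ₂)` where `T^{(λ₁)}` is computed with the
Levi-Civita connection of `λ₁² m`. -/
theorem stmt_5 (m : (Fin 2 → ℝ) → Matrix (Fin 2) (Fin 2) ℝ)
    (hmsmooth : ∀ A B, ContDiff ℝ (⊤ : ℕ∞) fun x => m x A B)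
    (hmsym : ∀ x, (m x).IsSymm) (hmpos : ∀ x, (m x).PosDef)
    (lam₁ lam₂ : (Fin 2 → ℝ) → ℝ)
    (h₁ : ContDiff ℝ (⊤ : ℕ∞) lam₁) (h₂ : ContDiff ℝ (⊤ : ℕ∞) lam₂)
    (h₁pos : ∀ x, 0 < lam₁ x) (h₂pos : ∀ x, 0 < lam₂ x)
    -- `U` transforms under a rescaling with factor `λ` as `Ũ = U + T(λ)`;
    -- then the two-step and one-step transformations agree:
    (U U₁ U₁₂ : (Fin 2 → ℝ) → Fin 2 → Fin 2 → ℝ)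
    (hU₁ : ∀ x A B, U₁ x A B = U x A B + schoutenShift m lam₁ x A B)
    (hU₁₂ : ∀ x A B, U₁₂ x A B =
      U₁ x A B + schoutenShift (fun y => (lam₁ y)^2 • m y) lam₂ x A B) :
    ∀ x A B,
      schoutenShift m (fun y => lam₁ y * lam₂ y) x A B
        = schoutenShift m lam₁ x A B
          + schoutenShift (fun y => (lam₁ y)^2 • m y) lam₂ x A B ∧
      U₁₂ x A B = U x A B + schoutenShift m (fun y => lam₁ y * lam₂ y) x A B := by
  have key : ∀ x A B,
      schoutenShift m (fun y => lam₁ y * lam₂ y) x A B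
        = schoutenShift m lam₁ x A B
          + schoutenShift (fun y => (lam₁ y)^2 • m y) lam₂ x A B := by
    intro x A B
    have h1x : lam₁ x ≠ 0 := (h₁pos x).ne'
    have h2x : lam₂ x ≠ 0 := (h₂pos x).ne'
    have hdet : (m x).det ≠ 0 := (hmpos x).det_pos.ne'
    have hdu : IsUnit (m x).det := isUnit_iff_ne_zero.2 hdet
    have hinv : ((lam₁ x)^2 • m x)⁻¹ = ((lam₁ x)^2)⁻¹ • (m x)⁻¹ := by
      apply Matrix.inv_eq_left_inv
      rw [Matrix.smul_mul, Matrix.mul_smul, smul_smul,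
        inv_mul_cancel₀ (pow_ne_zero 2 h1x), one_smul, Matrix.nonsing_inv_mul _ hdu]
    have hisym : (m x)⁻¹ 0 1 = (m x)⁻¹ 1 0 := by
      have h := Matrix.transpose_nonsing_inv (m x)
      rw [(hmsym x).eq] at h
      have h2 := congrFun (congrFun h 1) 0
      simpa [Matrix.transpose_apply] using h2
    have d1 : ∀ y, DifferentiableAt ℝ lam₁ y := fun y => (h₁.differentiable (by simp)) y
    have d2 : ∀ y, DifferentiableAt ℝ lam₂ y := fun y => (h₂.differentiable (by simp)) y
    have h_pl : ∀ i : Fin 2, pd i (fun y => lam₁ y * lam₂ y) x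
        = pd i lam₁ x * lam₂ x + lam₁ x * pd i lam₂ x := fun i => pd_mul i (d1 x) (d2 x)
    simp only [schoutenShift]
    rw [hess_prod m lam₁ lam₂ h₁ h₂ x A B,
      hess_conformal m hmsmooth hmpos lam₁ lam₂ h₁ h₁pos x A B]
    simp only [Fin.sum_univ_two, Matrix.smul_apply, smul_eq_mul, hinv, h_pl, hisym]
    field_simp
    ring
  intro x A B
  exact ⟨key x A B, by rw [hU₁₂, hU₁, key]; ring⟩
end

section
/- Under the conditions of the rigged connection ∇̄ on a null hypersurface N (torsion-free, with induced volume form ε_{abc} defined by -k_α ε_{abc} = η_{αμνσ} e^μ_a e^ν_b e^σ_c), the connection preserves the volume form if and only if the one-form φ_a := k^m H_{am} vanishes, where H_{ab} := e^α_a e^β_b ∇_α ℓ_β. That is, ∇̄_a ε_{bcd} = 0 ⟺ φ_a = 0. -/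
/-!
Evaluate the differentiated defining relation of `ε` on the rigging, `w = L`, where `g k L = -1`.
In the Gauss decomposition of `∇_a e_b` the `L`-component drops out, because `η` already has `L`
in its first slot, so the right-hand side is exactly the connection term of `∇̄_a ε_{bcd}`; on the
left, `g (∇_a k) L = -g (∇_a L) k = -φ_a`. Hence `∇̄_a ε_{bcd} = -φ_a ε_{bcd}`, and `ε ≠ 0`.
-/

open Function

namespace AlternatingMap

variable {R M N ι κ : Type*} [CommSemiring R] [AddCommMonoid M] [AddCommMonoid N]
  [Module R M] [Module R N] [DecidableEq ι]

theorem map_update_add_smul_self (f : M [⋀^ι]→ₗ[R] N) (v : ι → M) {i j : ι} (hij : i ≠ j)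
    (x : M) (r : R) : f (update v i (x + r • v j)) = f (update v i x) := by
  rw [f.map_update_add, f.map_update_smul, f.map_update_self _ hij, smul_zero, add_zero]

theorem map_update_sum_smul_add_smul_self [Fintype κ] (f : M [⋀^ι]→ₗ[R] N) (v : ι → M)
    {i j : ι} (hij : i ≠ j) {ℓ : M} (hℓ : v j = ℓ) (c : κ → R) (e : κ → M) (r : R) :
    f (update v i (∑ m, c m • e m + r • ℓ)) = ∑ m, c m • f (update v i (e m)) := by
  subst hℓ
  simp only [f.map_update_add_smul_self v hij, f.map_update_sum, f.map_update_smul]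

end AlternatingMap

theorem volumeForm_derivative_eq_connection_terms {R W : Type*} [CommRing R] [AddCommGroup W]
    [Module R W] (η : W [⋀^Fin 4]→ₗ[R] R) (L : W) (e : Fin 3 → W) (ε : Fin 3 → Fin 3 → Fin 3 → R)
    (hεL : ∀ b c d, η ![L, e b, e c, e d] = ε b c d) (De : Fin 3 → W)
    (Γ : Fin 3 → Fin 3 → R) (K : Fin 3 → R) (hDe : ∀ b, De b = ∑ m, Γ b m • e m + K b • L)
    (b c d : Fin 3) :
    η ![L, De b, e c, e d] + η ![L, e b, De c, e d] + η ![L, e b, e c, De d] =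
      ∑ m, (Γ b m * ε m c d + Γ c m * ε b m d + Γ d m * ε b c m) := by
  have slot₁ : ∀ x, ![L, x, e c, e d] = update ![L, L, e c, e d] 1 x := fun x => by
    ext i; fin_cases i <;> rfl
  have slot₂ : ∀ x, ![L, e b, x, e d] = update ![L, e b, L, e d] 2 x := fun x => by
    ext i; fin_cases i <;> rfl
  have slot₃ : ∀ x, ![L, e b, e c, x] = update ![L, e b, e c, L] 3 x := fun x => by
    ext i; fin_cases i <;> rfl
  rw [slot₁ (De b), slot₂ (De c), slot₃ (De d), hDe, hDe, hDe]
  rw [η.map_update_sum_smul_add_smul_self _ (j := 0) (by decide) (by rfl),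
    η.map_update_sum_smul_add_smul_self _ (j := 0) (by decide) (by rfl),
    η.map_update_sum_smul_add_smul_self _ (j := 0) (by decide) (by rfl)]
  simp only [← slot₁, ← slot₂, ← slot₃, hεL, smul_eq_mul, Finset.sum_add_distrib]

theorem forall_eq_zero_iff_of_eq_neg_mul {R α β : Type*} [Ring R] [NoZeroDivisors R]
    {T : α → β → β → β → R} {φ : α → R} {ε : β → β → β → R}
    (hT : ∀ a b c d, T a b c d = -φ a * ε b c d) {b₀ c₀ d₀ : β}
    (hε : ε b₀ c₀ d₀ ≠ 0) : (∀ a b c d, T a b c d = 0) ↔ ∀ a, φ a = 0 := by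
  refine ⟨fun h a => ?_, fun h a b c d => by rw [hT, h, neg_zero, zero_mul]⟩
  have h₀ : -φ a * ε b₀ c₀ d₀ = 0 := (hT a b₀ c₀ d₀).symm.trans (h a b₀ c₀ d₀)
  simpa [hε] using h₀

theorem stmt_11_general (W : Type*) [AddCommGroup W] [Module ℝ W]
    (g : W →ₗ[ℝ] W →ₗ[ℝ] ℝ) (hsym : ∀ u v : W, g u v = g v u)
    (η : W [⋀^Fin 4]→ₗ[ℝ] ℝ)
    (e : Fin 3 → W) (k L : W)
    (hLk : g L k = -1)
    (kc : Fin 3 → ℝ) (hkc : k = ∑ a, kc a • e a)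
    (ε : Fin 3 → Fin 3 → Fin 3 → ℝ)
    (hε : ∀ (w : W) (b c d : Fin 3), -(g k w) * ε b c d = η ![w, e b, e c, e d])
    (hεne : ε 0 1 2 ≠ 0)
    (De : Fin 3 → Fin 3 → W)
    (Γ : Fin 3 → Fin 3 → Fin 3 → ℝ) (Kf : Fin 3 → Fin 3 → ℝ)
    (hGauss : ∀ a b, De a b = (∑ c, Γ a b c • e c) + Kf a b • L)
    (Dk DL : Fin 3 → W)
    -- differentiating g(L,k) = -1 along the frame:
    (hcomp : ∀ a, g (DL a) k + g L (Dk a) = 0)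
    (H : Fin 3 → Fin 3 → ℝ) (hH : ∀ a b, H a b = g (DL a) (e b))
    (φ : Fin 3 → ℝ) (hφ : ∀ a, φ a = ∑ m, kc m * H a m)
    (Dε : Fin 3 → Fin 3 → Fin 3 → Fin 3 → ℝ)
    -- differentiated defining relation (space-time ∇η = 0):
    (hDrel : ∀ (a : Fin 3) (w : W) (b c d : Fin 3),
      -(g (Dk a) w) * ε b c d - (g k w) * Dε a b c d =
        η ![w, De a b, e c, e d] + η ![w, e b, De a c, e d] + η ![w, e b, e c, De a d])
    (covε : Fin 3 → Fin 3 → Fin 3 → Fin 3 → ℝ)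
    (hcovε : ∀ a b c d, covε a b c d = Dε a b c d
      - ∑ m, (Γ a b m * ε m c d + Γ a c m * ε b m d + Γ a d m * ε b c m)) :
    (∀ a b c d, covε a b c d = 0) ↔ (∀ a, φ a = 0) := by
  have hkL : g k L = -1 := by rw [hsym, hLk]
  have hεL : ∀ b c d, η ![L, e b, e c, e d] = ε b c d := fun b c d => by
    rw [← hε, hkL, neg_neg, one_mul]
  have hDLk : ∀ a, g (DL a) k = φ a := fun a => by
    simp only [hkc, map_sum, map_smul, smul_eq_mul, hφ, hH]
  have hDkL : ∀ a, g (Dk a) L = -φ a := fun a => by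
    rw [hsym, eq_neg_iff_add_eq_zero, ← hDLk, add_comm, hcomp]
  refine forall_eq_zero_iff_of_eq_neg_mul (fun a b c d => ?_) hεne
  have hrel := hDrel a L b c d
  rw [volumeForm_derivative_eq_connection_terms η L e ε hεL (De a) (Γ a) (Kf a) (hGauss a),
    hkL, hDkL] at hrel
  rw [hcovε]
  linarith

/-- The rigged connection on a null hypersurface preserves the induced volume
form `ε_{abc}` (defined by `-k_α ε_{abc} = η_{αμνσ}e^μ_a e^ν_b e^σ_c`) if and
only if the one-form `φ_a = k^m H_{am}` vanishes, where
`H_{ab} = e^α_a e^β_b ∇_α ℓ_β`.  Pointwise formulation: `η` is the space-time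
volume 4-form (an alternating 4-linear map), `Dk a = ∇_{e_a}k`,
`DL a = ∇_{e_a}L`, `De a b = ∇_{e_a}e_b` with Gauss decomposition,
`Dε a b c d = ∂_a ε_{bcd}` determined by differentiating the defining relation
(using `∇η = 0`), and `covε a b c d = ∇̄_a ε_{bcd}`. -/
theorem stmt_11 (W : Type*) [AddCommGroup W] [Module ℝ W]
    (g : W →ₗ[ℝ] W →ₗ[ℝ] ℝ) (hsym : ∀ u v : W, g u v = g v u)
    (η : W [⋀^Fin 4]→ₗ[ℝ] ℝ)
    (e : Fin 3 → W) (k L : W)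
    (hkN : ∀ a, g k (e a) = 0) (hknull : g k k = 0)
    (hLnull : g L L = 0) (hLk : g L k = -1)
    (kc : Fin 3 → ℝ) (hkc : k = ∑ a, kc a • e a)
    (ε : Fin 3 → Fin 3 → Fin 3 → ℝ)
    (hε : ∀ (w : W) (b c d : Fin 3), -(g k w) * ε b c d = η ![w, e b, e c, e d])
    (hεne : ε 0 1 2 ≠ 0)
    (De : Fin 3 → Fin 3 → W)
    (Γ : Fin 3 → Fin 3 → Fin 3 → ℝ) (Kf : Fin 3 → Fin 3 → ℝ)
    (hGauss : ∀ a b, De a b = (∑ c, Γ a b c • e c) + Kf a b • L)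
    (Dk DL : Fin 3 → W)
    -- differentiating g(L,k) = -1 along the frame:
    (hcomp : ∀ a, g (DL a) k + g L (Dk a) = 0)
    (H : Fin 3 → Fin 3 → ℝ) (hH : ∀ a b, H a b = g (DL a) (e b))
    (φ : Fin 3 → ℝ) (hφ : ∀ a, φ a = ∑ m, kc m * H a m)
    (Dε : Fin 3 → Fin 3 → Fin 3 → Fin 3 → ℝ)
    -- differentiated defining relation (space-time ∇η = 0):
    (hDrel : ∀ (a : Fin 3) (w : W) (b c d : Fin 3),
      -(g (Dk a) w) * ε b c d - (g k w) * Dε a b c d =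
        η ![w, De a b, e c, e d] + η ![w, e b, De a c, e d] + η ![w, e b, e c, De a d])
    (covε : Fin 3 → Fin 3 → Fin 3 → Fin 3 → ℝ)
    (hcovε : ∀ a b c d, covε a b c d = Dε a b c d
      - ∑ m, (Γ a b m * ε m c d + Γ a c m * ε b m d + Γ a d m * ε b c m)) :
    (∀ a b c d, covε a b c d = 0) ↔ (∀ a, φ a = 0) :=
  stmt_11_general W g hsym η e k L hLk kc hkc ε hε hεne De Γ Kf hGauss Dk DL hcomp H hH φ hφ Dε
    hDrel covε hcovε
end

section
/- At null infinity J with Λ = 0, in the divergence-free conformal gauge (κ̲ = 0, hence f = ν = 0), the transport equation for the leaf scalar curvature reduces to £_N R̲ = 0; that is, all leaves of the foliation of J are isometric in the sense that the 2-dimensional scalar curvature is constant along the null generators. -/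
/-! Fields on (a coordinate patch of) null infinity `J`, a 3-dimensional
hypersurface; the first two coordinates are coordinates on the leaves of the
foliation, so leaf covariant derivatives `∇̲_M` use directions `M : Fin 2`. -/

noncomputable def pdL (M : Fin 2) (f : (Fin 3 → ℝ) → ℝ) (x : Fin 3 → ℝ) : ℝ :=
  fderiv ℝ f x (Pi.single M.castSucc 1)

@[simp]
theorem pdL_const (M : Fin 2) (c : ℝ) : pdL M (fun _ => c) = fun _ => 0 := by
  funext x
  simp only [pdL, fderiv_const_apply, zero_apply]

/-- At null infinity with `Λ = 0`, in the divergence-free conformal gauge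
(`κ̲ = 0`), the Bianchi-derived transport equation
`£_N R̲ + (κ̲/2)R̲ + κ̲(£_Nθ̲ + (κ̲/2)θ̲) - 2κ̲£_ℓf + Δ̲κ̲
 - 2∇̲_Mκ̲ ∇̲^M ln Ḟ = 0`
reduces to `£_N R̲ = 0`: all leaves are isometric in the sense that the
2-dimensional scalar curvature is constant along the null generators. -/
theorem stmt_18
    (minv : (Fin 3 → ℝ) → Matrix (Fin 2) (Fin 2) ℝ)   -- inverse leaf metric m̲^{MN}
    (Γ2 : (Fin 3 → ℝ) → Fin 2 → Fin 2 → Fin 2 → ℝ)     -- leaf Christoffel symbols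
    (κ R LieR Lieθ θ Lℓf lnFdot : (Fin 3 → ℝ) → ℝ)
    (hTransport : ∀ x, LieR x + (κ x / 2) * R x
      + κ x * (Lieθ x + (κ x / 2) * θ x) - 2 * κ x * Lℓf x
      + (∑ M, ∑ N, minv x M N *
          (pdL M (fun y => pdL N κ y) x - ∑ P, Γ2 x P M N * pdL P κ x))
      - 2 * (∑ M, ∑ N, minv x M N * pdL M κ x * pdL N lnFdot x) = 0)
    (hgauge : ∀ x, κ x = 0) :
    ∀ x, LieR x = 0 := by
  obtain rfl : κ = fun _ => 0 := funext hgauge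
  intro x
  simpa using hTransport x
end
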